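/- Fix σ > 0, n ≥ 1, K ≥ 2. Let (Ω, P) be a probability space and η₁, η₂, … : Ω → ℝⁿ be i.i.d. random vectors whose n coordinates are independent N(0, σ²) Gaussians. Let z ∈ ℝⁿ and let θ₁, …, θ_K ∈ ℝⁿ with ‖θ_a‖₂ = 1 for all a. Let a* ∈ {1, …, K} and Δ > 0 satisfy (θ_{a*} − θ_a)ᵀz > Δ for all a ≠ a*. For t ≥ 1 define ẑ_t = z + (1/t)Σ_{s=1}^t η_s and let a_t ∈ argmax_{a} θ_aᵀ ẑ_t be the Greedy1 action (measurably chosen). Then for every t ≥ 1, the probability that Greedy1 plays a suboptimal arm at round t satisfies P(a_t ≠ a*) ≤ 2K exp(−tΔ²/(8σ²)). -/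

import Mathlib

open MeasureTheory ProbabilityTheory Real Finset
open scoped NNReal ENNReal Matrix

/-!
Write `noise_b = θ_bᵀ(ẑ_t − z)`. Since `θ_b` is a unit vector, `noise_b` is a weighted sum of the
`t·n` independent `N(0, σ²)` coordinates `η_s,i` with squared weights summing to `1/t`, so it has a
sub-Gaussian mgf with variance proxy `σ²/t`, and Chernoff's bound on both tails gives
`P(|noise_b| ≥ Δ/2) ≤ 2 exp(−tΔ²/(8σ²))`. If all `K` noises are below `Δ/2`, the gap `Δ` at `a*`
survives the perturbation, so `a*` is the only maximiser of `θ_bᵀ ẑ_t`; a union bound over the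
arms concludes.
-/

namespace ProbabilityTheory

variable {Ω : Type*} [MeasurableSpace Ω] {μ : Measure Ω}

lemma hasSubgaussianMGF_of_map_eq_gaussianReal [IsProbabilityMeasure μ] {X : Ω → ℝ} {v : ℝ≥0}
    (h : μ.map X = gaussianReal 0 v) : HasSubgaussianMGF X v μ where
  integrable_exp_mul t := by
    rw [← mgf_pos_iff, mgf_gaussianReal h]
    exact exp_pos _
  mgf_le t := by simp [mgf_gaussianReal h]

namespace HasSubgaussianMGF

lemma measure_abs_ge_le [IsFiniteMeasure μ] {X : Ω → ℝ} {c : ℝ≥0}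
    (h : HasSubgaussianMGF X c μ) {ε : ℝ} (hε : 0 ≤ ε) :
    μ {ω | ε ≤ |X ω|} ≤ ENNReal.ofReal (2 * exp (-ε ^ 2 / (2 * c))) := by
  have hsplit : {ω | ε ≤ |X ω|} = {ω | ε ≤ X ω} ∪ {ω | ε ≤ (-X) ω} := by
    ext ω
    exact le_abs (a := ε) (b := X ω)
  have htail : ∀ {Y : Ω → ℝ}, HasSubgaussianMGF Y c μ →
      μ {ω | ε ≤ Y ω} ≤ ENNReal.ofReal (exp (-ε ^ 2 / (2 * c))) := fun hY ↦ by
    rw [← ofReal_measureReal]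
    exact ENNReal.ofReal_le_ofReal (hY.measure_ge_le hε)
  calc μ {ω | ε ≤ |X ω|}
      ≤ μ {ω | ε ≤ X ω} + μ {ω | ε ≤ (-X) ω} := hsplit ▸ measure_union_le _ _
    _ ≤ ENNReal.ofReal (exp (-ε ^ 2 / (2 * c))) + ENNReal.ofReal (exp (-ε ^ 2 / (2 * c))) :=
        add_le_add (htail h) (htail h.neg)
    _ = ENNReal.ofReal (2 * exp (-ε ^ 2 / (2 * c))) := by
        rw [← ENNReal.ofReal_add (exp_nonneg _) (exp_nonneg _), ← two_mul]

lemma sum_mul_of_iIndepFun {ι : Type*} {ξ : ι → Ω → ℝ} (hindep : iIndepFun ξ μ) {v : ℝ≥0}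
    {s : Finset ι} (h : ∀ i ∈ s, HasSubgaussianMGF (ξ i) v μ) (w : ι → ℝ) :
    HasSubgaussianMGF (fun ω ↦ ∑ i ∈ s, w i * ξ i ω)
      ((∑ i ∈ s, ‖w i‖₊ ^ 2) * v) μ := by
  have hsum := sum_of_iIndepFun
    (hindep.comp (fun i x ↦ w i * x) fun i ↦ measurable_const_mul (w i))
    fun i hi ↦ (h i hi).const_mul (w i)
  convert hsum using 1
  · rfl
  apply NNReal.eq
  simp only [NNReal.coe_mul, NNReal.coe_sum, NNReal.coe_pow, coe_nnnorm, Real.norm_eq_abs,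
    sq_abs, Finset.sum_mul]
  rfl

end HasSubgaussianMGF

lemma hasSubgaussianMGF_dotProduct_sampleMean {ι : Type*} [Fintype ι] {η : ℕ → Ω → ι → ℝ}
    (hindep : iIndepFun (fun (p : ℕ × ι) ω ↦ η p.1 ω p.2) μ) {v : ℝ≥0}
    (h : ∀ s i, HasSubgaussianMGF (fun ω ↦ η s ω i) v μ)
    (θ : ι → ℝ) (hθ : ∑ i, θ i ^ 2 = 1) (S : Finset ℕ) :
    HasSubgaussianMGF (fun ω ↦ θ ⬝ᵥ ((#S : ℝ)⁻¹ • ∑ s ∈ S, η s ω))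
      (v / #S) μ := by
  have hsum := HasSubgaussianMGF.sum_mul_of_iIndepFun hindep (s := S ×ˢ univ)
    (fun p _ ↦ h p.1 p.2) fun p ↦ (#S : ℝ)⁻¹ * θ p.2
  convert hsum using 1
  · funext ω
    simp only [dotProduct, Pi.smul_apply, Finset.sum_apply, smul_eq_mul,
      Finset.sum_product_right, Finset.mul_sum]
    exact Finset.sum_congr rfl fun i _ ↦ Finset.sum_congr rfl fun s _ ↦ by ring
  · apply NNReal.eq
    have hnorm : ∑ p ∈ S ×ˢ univ, ‖(#S : ℝ)⁻¹ * θ p.2‖ ^ 2 = (#S : ℝ)⁻¹ := by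
      simp only [Finset.sum_product, norm_mul, mul_pow, Real.norm_eq_abs, sq_abs, ← Finset.mul_sum,
        hθ, Finset.sum_const, nsmul_eq_mul, mul_one]
      rcases eq_or_ne (#S : ℝ) 0 with h0 | h0
      · simp [h0]
      · field_simp
    push_cast
    rw [hnorm, div_eq_inv_mul]

lemma measure_abs_dotProduct_sampleMean_ge_le [IsProbabilityMeasure μ] {ι : Type*} [Fintype ι]
    {η : ℕ → Ω → ι → ℝ} (hindep : iIndepFun (fun (p : ℕ × ι) ω ↦ η p.1 ω p.2) μ) {v : ℝ≥0}
    (hgauss : ∀ s i, μ.map (fun ω ↦ η s ω i) = gaussianReal 0 v)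
    (θ : ι → ℝ) (hθ : ∑ i, θ i ^ 2 = 1) (t : ℕ) {ε : ℝ} (hε : 0 ≤ ε) :
    μ {ω | ε ≤ |θ ⬝ᵥ ((t : ℝ)⁻¹ • ∑ s ∈ Icc 1 t, η s ω)|}
      ≤ ENNReal.ofReal (2 * exp (-(t * ε ^ 2) / (2 * v))) := by
  have h := (hasSubgaussianMGF_dotProduct_sampleMean hindep
    (fun s i ↦ hasSubgaussianMGF_of_map_eq_gaussianReal (hgauss s i)) θ hθ
    (Icc 1 t)).measure_abs_ge_le hε
  rw [Nat.card_Icc, add_tsub_cancel_right] at h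
  convert h using 4
  push_cast
  simp only [div_eq_mul_inv, mul_inv, inv_inv]
  ring

end ProbabilityTheory

lemma measure_iUnion_le_ofReal_card_mul {α ι : Type*} [MeasurableSpace α] [Fintype ι]
    {μ : Measure α} {A : ι → Set α} {x : ℝ} (h : ∀ i, μ (A i) ≤ ENNReal.ofReal x) :
    μ (⋃ i, A i) ≤ ENNReal.ofReal (Fintype.card ι * x) :=
  calc μ (⋃ i, A i) ≤ ∑ i, μ (A i) := measure_iUnion_fintype_le _ _
    _ ≤ ∑ _i : ι, ENNReal.ofReal x := Finset.sum_le_sum fun i _ ↦ h i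
    _ = ENNReal.ofReal (Fintype.card ι * x) := by
      rw [Finset.sum_const, Finset.card_univ, nsmul_eq_mul, ENNReal.ofReal_mul (Nat.cast_nonneg _),
        ENNReal.ofReal_natCast]

lemma eq_of_le_of_abs_sub_lt_half_gap {ι : Type*} {f g : ι → ℝ} {Δ : ℝ} {i₀ j : ι}
    (hgap : j ≠ i₀ → Δ < g i₀ - g j) (hj : |f j - g j| < Δ / 2)
    (hi₀ : |f i₀ - g i₀| < Δ / 2) (hle : f i₀ ≤ f j) : j = i₀ := by
  by_contra hne
  linarith [hgap hne, abs_lt.mp hj, abs_lt.mp hi₀]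

theorem greedy1_misplay_probability_general (n K : ℕ)
    (σ Δ : ℝ) (hΔ : 0 < Δ)
    (Ω : Type*) [MeasurableSpace Ω] (P : Measure Ω) [IsProbabilityMeasure P]
    (η : ℕ → Ω → (Fin n → ℝ))
    (hindep : iIndepFun (fun (p : ℕ × Fin n) ω => η p.1 ω p.2) P)
    (hgauss : ∀ (s : ℕ) (i : Fin n),
      Measure.map (fun ω => η s ω i) P = gaussianReal 0 ⟨σ ^ 2, sq_nonneg σ⟩)
    (z : Fin n → ℝ) (θ : Fin K → Fin n → ℝ) (hθ : ∀ a, ∑ i, θ a i ^ 2 = 1)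
    (astar : Fin K)
    (hgap : ∀ a : Fin K, a ≠ astar → Δ < ∑ i, (θ astar i - θ a i) * z i)
    (zhat : ℕ → Ω → (Fin n → ℝ))
    (hzhat : ∀ t ω, zhat t ω = fun i => z i + (t : ℝ)⁻¹ * ∑ s ∈ Icc 1 t, η s ω i)
    (a : ℕ → Ω → Fin K)
    (hgreedy : ∀ t, 1 ≤ t → ∀ ω, ∀ b : Fin K,
      ∑ i, θ b i * zhat t ω i ≤ ∑ i, θ (a t ω) i * zhat t ω i) :
    ∀ t : ℕ, 1 ≤ t →
      P {ω | a t ω ≠ astar} ≤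
        ENNReal.ofReal (2 * K * exp (-((t : ℝ) * Δ ^ 2) / (8 * σ ^ 2))) := by
  intro t ht
  have hnoise : ∀ b, P {ω | Δ / 2 ≤ |θ b ⬝ᵥ (zhat t ω - z)|}
      ≤ ENNReal.ofReal (2 * exp (-((t : ℝ) * Δ ^ 2) / (8 * σ ^ 2))) := by
    intro b
    have hmean : ∀ ω, zhat t ω - z = (t : ℝ)⁻¹ • ∑ s ∈ Icc 1 t, η s ω := fun ω ↦ by
      funext i
      simp [hzhat]
    simp only [hmean]
    convert measure_abs_dotProduct_sampleMean_ge_le hindep hgauss (θ b) (hθ b) t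
      (half_pos hΔ).le using 4
    -- the coercion of `⟨σ ^ 2, _⟩` to `ℝ` is `σ ^ 2` only up to unfolding, out of reach of `push_cast`
    change _ = -(t * (Δ / 2) ^ 2) / (2 * σ ^ 2)
    ring
  have hmisplay : {ω | a t ω ≠ astar} ⊆ ⋃ b, {ω | Δ / 2 ≤ |θ b ⬝ᵥ (zhat t ω - z)|} := by
    intro ω hω
    by_contra hsmall
    simp only [Set.mem_iUnion, not_exists, Set.mem_ofPred_eq, not_le, dotProduct_sub] at hsmall
    refine hω (eq_of_le_of_abs_sub_lt_half_gap (f := fun b ↦ θ b ⬝ᵥ zhat t ω)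
      (g := fun b ↦ θ b ⬝ᵥ z) (fun hne ↦ ?_) (hsmall _) (hsmall _) (hgreedy t ht ω astar))
    rw [← sub_dotProduct]
    exact hgap _ hne
  calc P {ω | a t ω ≠ astar}
      ≤ P (⋃ b, {ω | Δ / 2 ≤ |θ b ⬝ᵥ (zhat t ω - z)|}) := measure_mono hmisplay
    _ ≤ ENNReal.ofReal (Fintype.card (Fin K) * (2 * exp (-((t : ℝ) * Δ ^ 2) / (8 * σ ^ 2)))) :=
      measure_iUnion_le_ofReal_card_mul hnoise
    _ = ENNReal.ofReal (2 * K * exp (-((t : ℝ) * Δ ^ 2) / (8 * σ ^ 2))) := by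
      rw [Fintype.card_fin, ← mul_assoc, mul_comm (K : ℝ) 2]

/-- **Per-round misplay bound for Greedy1.**
Under the Greedy1 setup (i.i.d. Gaussian noise `η_s` with independent `N(0,σ²)` coordinates,
unit-norm arms, gap `Δ` at the optimal arm `a*`, averaged estimates
`ẑ_t = z + (1/t)Σ_{s=1}^t η_s`, greedy actions `a_t`), for every round `t ≥ 1` the
probability of playing a suboptimal arm satisfies `P(a_t ≠ a*) ≤ 2K exp(−tΔ²/(8σ²))`. -/
theorem greedy1_misplay_probability (n K : ℕ) (hn : 1 ≤ n) (hK : 2 ≤ K)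
    (σ Δ : ℝ) (hσ : 0 < σ) (hΔ : 0 < Δ)
    (Ω : Type*) [MeasurableSpace Ω] (P : Measure Ω) [IsProbabilityMeasure P]
    (η : ℕ → Ω → (Fin n → ℝ)) (hmeas : ∀ s, Measurable (η s))
    (hindep : iIndepFun (fun (p : ℕ × Fin n) ω => η p.1 ω p.2) P)
    (hgauss : ∀ (s : ℕ) (i : Fin n),
      Measure.map (fun ω => η s ω i) P = gaussianReal 0 ⟨σ ^ 2, sq_nonneg σ⟩)
    (z : Fin n → ℝ) (θ : Fin K → Fin n → ℝ) (hθ : ∀ a, ∑ i, θ a i ^ 2 = 1)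
    (astar : Fin K)
    (hgap : ∀ a : Fin K, a ≠ astar → Δ < ∑ i, (θ astar i - θ a i) * z i)
    (zhat : ℕ → Ω → (Fin n → ℝ))
    (hzhat : ∀ t ω, zhat t ω = fun i => z i + (t : ℝ)⁻¹ * ∑ s ∈ Icc 1 t, η s ω i)
    (a : ℕ → Ω → Fin K) (hameas : ∀ t, Measurable (a t))
    (hgreedy : ∀ t, 1 ≤ t → ∀ ω, ∀ b : Fin K,
      ∑ i, θ b i * zhat t ω i ≤ ∑ i, θ (a t ω) i * zhat t ω i) :
    ∀ t : ℕ, 1 ≤ t →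
      P {ω | a t ω ≠ astar} ≤
        ENNReal.ofReal (2 * K * exp (-((t : ℝ) * Δ ^ 2) / (8 * σ ^ 2))) :=
  greedy1_misplay_probability_general n K σ Δ hΔ Ω P η hindep hgauss z θ hθ astar hgap zhat hzhat a
    hgreedy
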